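/- arXiv:1202.1122 — 2 statements merged into one kernel-verified Lean document; each statement's English description precedes it below -/
import Mathlib

section
/- Let a ≥ 4, J = ⟨y²+z^a, yz²⟩, E = a y ∂/∂y + 2 z ∂/∂z the Euler vector field (for which y²+z^a has quasi-degree 2a and yz² has quasi-degree a+4), and for A ≠ 0 set X = (B/((a+4)A))·z·E. Then the Lie derivative satisfies L_X(A dy∧dz) = B z dy∧dz, and L_X(B z dy∧dz) has zero algebraic restriction to J, and the flow of X preserves the ideal J. -/
open Filter Topology

set_option maxHeartbeats 1000000
set_option synthInstance.maxHeartbeats 400000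

noncomputable section

/-- The space `ℂ^m`. -/
abbrev Cm (m : ℕ) := Fin m → ℂ

/-- Model of the ring of `ℂ`-analytic function-germs at `0` on `ℂ^m`:
functions that are analytic at `0`. -/
def AnalyticGermRing (m : ℕ) : Subalgebra ℂ (Cm m → ℂ) where
  carrier := {f | AnalyticAt ℂ f 0}
  mul_mem' := fun hf hg => hf.mul hg
  add_mem' := fun hf hg => hf.add hg
  algebraMap_mem' := fun _ => analyticAt_const

/-- `O m` : the ring of analytic function-germs at `0 ∈ ℂ^m` (model). -/
abbrev O (m : ℕ) := AnalyticGermRing m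

theorem coord_analyticAt (m : ℕ) (i : Fin m) (x : Cm m) :
    AnalyticAt ℂ (fun y : Cm m => y i) x :=
  (ContinuousLinearMap.proj (R := ℂ) (φ := fun _ : Fin m => ℂ) i).analyticAt x

/-- The `i`-th coordinate function as an analytic germ. -/
def coordO (m : ℕ) (i : Fin m) : O m := ⟨fun y => y i, coord_analyticAt m i 0⟩

/-- Partial derivative `∂/∂x_i` on analytic germs. -/
def pd {m : ℕ} (i : Fin m) (f : O m) : O m :=
  ⟨fun x => fderiv ℂ (f : Cm m → ℂ) x (Pi.single i 1), by
    have h1 : AnalyticAt ℂ (fderiv ℂ (f : Cm m → ℂ)) 0 := f.2.fderiv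
    have h2 := (ContinuousLinearMap.apply ℂ ℂ (Pi.single i 1 : Cm m)).analyticAt
      (fderiv ℂ (f : Cm m → ℂ) 0)
    exact h2.comp h1⟩

/-- Germs of analytic differential `p`-forms on `ℂ^m`, given by their
coefficient family: `ω J` is the coefficient of `dx_{J 0} ⊗ ⋯ ⊗ dx_{J (p-1)}`. -/
abbrev Form (m p : ℕ) := (Fin p → Fin m) → O m

/-- A form is alternating: coefficients vanish on non-injective indices and are
antisymmetric under permutations. -/
def IsAlt {m p : ℕ} (ω : Form m p) : Prop :=
  (∀ J : Fin p → Fin m, ¬ Function.Injective J → ω J = 0) ∧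
  ∀ (J : Fin p → Fin m) (σ : Equiv.Perm (Fin p)),
    ω (J ∘ σ) = ((Equiv.Perm.sign σ : ℤ) : ℂ) • ω J

/-- Exterior derivative on coefficient families. -/
def extD {m p : ℕ} (ω : Form m p) : Form m (p + 1) :=
  fun J => ∑ i : Fin (p + 1), ((-1 : ℂ) ^ (i : ℕ)) • pd (J i) (ω (J ∘ i.succAbove))

/-- Exterior derivative from degree `p-1` to degree `p` (zero in degree `0`). -/
def dLow {m : ℕ} : {p : ℕ} → Form m (p - 1) → Form m p
  | 0, _ => 0
  | _ + 1, β => extD β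

/-- `ω ∈ I·Λ^p`: all coefficients lie in the ideal `I`. -/
def memIF {m p : ℕ} (I : Ideal (O m)) (ω : Form m p) : Prop := ∀ J, ω J ∈ I

/-- Equality of forms as germs at `0`. -/
def FormEq {m p : ℕ} (ω₁ ω₂ : Form m p) : Prop :=
  ∀ J, ((ω₁ J : Cm m → ℂ)) =ᶠ[𝓝 (0 : Cm m)] (ω₂ J : Cm m → ℂ)

/-- `ω` has zero algebraic restriction to `I`:
`ω = α + dβ` with `α ∈ I·Λ^p`, `β ∈ I·Λ^{p-1}`. -/
def ZeroAR {m p : ℕ} (I : Ideal (O m)) (ω : Form m p) : Prop :=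
  ∃ (α : Form m p) (β : Form m (p - 1)),
    memIF I α ∧ memIF I β ∧ FormEq ω (α + dLow β)

/-- Interior product with a vector field. -/
def iprod {m : ℕ} (X : Fin m → O m) : {p : ℕ} → Form m p → Form m (p - 1)
  | 0, _ => 0
  | _ + 1, ω => fun J => ∑ k : Fin m, X k * ω (Fin.cons k J)

/-- Lie derivative of a form along a vector field (Cartan's formula). -/
def lieD {m p : ℕ} (X : Fin m → O m) (ω : Form m p) : Form m p :=
  dLow (iprod X ω) + (show Form m p from iprod X (extD ω))

/-- Wedge product of forms (on coefficient families, with the usual normalization). -/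
def wedge {m p q : ℕ} (ω : Form m p) (γ : Form m q) : Form m (p + q) :=
  ((p.factorial * q.factorial : ℂ))⁻¹ •
    (fun K => ∑ σ : Equiv.Perm (Fin (p + q)),
      ((Equiv.Perm.sign σ : ℤ) : ℂ) •
        (ω (fun i => K (σ (Fin.castAdd q i))) * γ (fun j => K (σ (Fin.natAdd p j)))))

/-- Coefficient family of the pullback `Φ^*ω` (as plain functions). -/
def formPullFun {k m p : ℕ} (Φ : Cm k → Cm m) (ω : Form m p) :
    (Fin p → Fin k) → Cm k → ℂ :=
  fun J x => ∑ K : Fin p → Fin m,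
    (ω K : Cm m → ℂ) (Φ x) *
      ∏ i : Fin p, fderiv ℂ (fun y => Φ y (K i)) x (Pi.single (J i) 1)

/-- The analytic form `ω'` represents the coefficient family `c` (as germs at `0`). -/
def Represents {k p : ℕ} (ω' : Form k p) (c : (Fin p → Fin k) → Cm k → ℂ) : Prop :=
  ∀ J, (ω' J : Cm k → ℂ) =ᶠ[𝓝 (0 : Cm k)] c J

/-- `Φ^*I = I` : `f ∈ I` iff `f ∘ Φ` is (the germ of) an element of `I`. -/
def PreservesIdeal {m : ℕ} (Φ : Cm m → Cm m) (I : Ideal (O m)) : Prop :=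
  ∀ f : O m, f ∈ I ↔
    ∃ g ∈ I, (g : Cm m → ℂ) =ᶠ[𝓝 (0 : Cm m)] fun x => (f : Cm m → ℂ) (Φ x)

/-- A diffeomorphism-germ of `(ℂ^m, 0)` (model). -/
structure LocalDiffeo (m : ℕ) where
  toFun : Cm m → Cm m
  invFun : Cm m → Cm m
  an : AnalyticAt ℂ toFun 0
  map_zero : toFun 0 = 0
  left_inv : ∀ᶠ x in 𝓝 (0 : Cm m), invFun (toFun x) = x
  right_inv : ∀ᶠ x in 𝓝 (0 : Cm m), toFun (invFun x) = x

/-- The algebraic restrictions `[ω₁]_I` and `[ω₂]_I` are diffeomorphic (via a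
diffeomorphism-germ preserving `I`). -/
def ARDiffeomorphic {m p : ℕ} (I : Ideal (O m)) (ω₁ ω₂ : Form m p) : Prop :=
  ∃ Φ : LocalDiffeo m, PreservesIdeal Φ.toFun I ∧
    ∀ ω' : Form m p, Represents ω' (formPullFun Φ.toFun ω₂) → ZeroAR I (ω' - ω₁)

/-- The Euler vector field `Σ λ_i x_i ∂/∂x_i`. -/
def eulerVF (m : ℕ) (lam : Fin m → ℕ) : Fin m → O m :=
  fun i => ((lam i : ℂ)) • coordO m i

/-- The coordinate `y` on `ℂ²`. -/
def Y : O 2 := coordO 2 0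
/-- The coordinate `z` on `ℂ²`. -/
def Z : O 2 := coordO 2 1

/-- The 1-form `g dy + h dz` on `ℂ²`. -/
def oneF (g h : O 2) : Form 2 1 := fun J => if J 0 = 0 then g else h

/-- The 2-form `f dy ∧ dz` on `ℂ²`. -/
def twoF (f : O 2) : Form 2 2 :=
  fun J => if J 0 = 0 ∧ J 1 = 1 then f else if J 0 = 1 ∧ J 1 = 0 then -f else 0


/-!
By Cartan's formula the Lie derivative of `f dy ∧ dz` along `X` is `div (f X) dy ∧ dz`. For
`X = c z E` this turns `A dy ∧ dz` into `c (a + 4) A z dy ∧ dz`, and `B z dy ∧ dz` into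
`c B (a + 6) z² dy ∧ dz = d (c B (a + 6) y z² dz)`, whose primitive has coefficients in `J`.

The flow of `X` is explicit, `(y, z) ↦ (y w^(-a/2), z / w)` with `w = 1 - 2 c τ z`, and it
multiplies `y² + z^a` by `w^(-a)` and `y z²` by `w^(-(a+4)/2)`, units near `0`; hence it maps `J`
into `J`, and so does its inverse, the flow at time `-τ`. By uniqueness of solutions of the ODE,
any flow of `X` agrees with it near `0`. Finally, since `y² + z^a` and `y z²` vanish
simultaneously only at `0`, membership in `J` depends only on the germ at `0`.
-/

open Set

section Germs

variable {m : ℕ}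

@[simp] lemma coordO_apply (i : Fin m) (x : Cm m) : (coordO m i : Cm m → ℂ) x = x i := rfl

lemma differentiable_coordO (i : Fin m) : Differentiable ℂ (coordO m i : Cm m → ℂ) :=
  fun x => (coord_analyticAt m i x).differentiableAt

lemma pd_apply (i : Fin m) (f : O m) (x : Cm m) :
    (pd i f : Cm m → ℂ) x = fderiv ℂ (f : Cm m → ℂ) x (Pi.single i 1) := rfl

lemma pd_neg (i : Fin m) (f : O m) : pd i (-f) = -pd i f := by
  ext x; simp [pd_apply, fderiv_neg]

lemma pd_zero (i : Fin m) : pd i (0 : O m) = 0 := by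
  ext x; simp [pd_apply]

lemma pd_smul (i : Fin m) (s : ℂ) (f : O m) : pd i (s • f) = s • pd i f := by
  ext x; simp [pd_apply, fderiv_const_smul_field]

lemma pd_mul (i : Fin m) {f g : O m} (hf : Differentiable ℂ (f : Cm m → ℂ))
    (hg : Differentiable ℂ (g : Cm m → ℂ)) : pd i (f * g) = pd i f * g + f * pd i g := by
  ext x; simp [pd_apply, fderiv_mul (hf x) (hg x)]; ring

lemma pd_coordO (i j : Fin m) : pd i (coordO m j) = if i = j then 1 else 0 := by
  ext x
  change fderiv ℂ (fun y : Cm m => y j) x _ = _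
  rw [(hasFDerivAt_apply j x).fderiv]
  split_ifs with h <;> simp [h, eq_comm]

lemma PreservesIdeal.congr {Φ Ψ : Cm m → Cm m} {I : Ideal (O m)} (h : PreservesIdeal Φ I)
    (hΦΨ : Φ =ᶠ[𝓝 0] Ψ) : PreservesIdeal Ψ I := by
  intro f
  rw [h f]
  have hcomp : (fun x => (f : Cm m → ℂ) (Φ x)) =ᶠ[𝓝 0] fun x => (f : Cm m → ℂ) (Ψ x) :=
    hΦΨ.fun_comp (f : Cm m → ℂ)
  exact exists_congr fun g => and_congr_right fun _ => ⟨(·.trans hcomp), (·.trans hcomp.symm)⟩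

/-- Off `g₁ = 0` divide by `g₁`, on it by `g₂`: both quotients vanish near `0`, so they are
analytic there. -/
lemma mem_span_pair_of_eventually_zero {g₁ g₂ d : O m}
    (hd : ∀ᶠ x in 𝓝 0, (d : Cm m → ℂ) x = 0)
    (hzero : ∀ x, (g₁ : Cm m → ℂ) x = 0 → (g₂ : Cm m → ℂ) x = 0 → (d : Cm m → ℂ) x = 0) :
    d ∈ Ideal.span {g₁, g₂} := by
  have analytic_of_zero : ∀ φ : Cm m → ℂ, (∀ x, (d : Cm m → ℂ) x = 0 → φ x = 0) →
      AnalyticAt ℂ φ 0 := fun φ hφ =>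
    (analyticAt_const (v := (0 : ℂ))).congr (hd.mono fun x hx => (hφ x hx).symm)
  let u : O m := ⟨fun x => (d : Cm m → ℂ) x / (g₁ : Cm m → ℂ) x,
    analytic_of_zero _ fun x hx => by simp [hx]⟩
  let v : O m :=
    ⟨fun x => if (g₁ : Cm m → ℂ) x = 0 then (d : Cm m → ℂ) x / (g₂ : Cm m → ℂ) x else 0,
    analytic_of_zero _ fun x hx => by simp [hx]⟩
  refine Ideal.mem_span_pair.mpr ⟨u, v, Subtype.ext (funext fun x => ?_)⟩
  change (d : Cm m → ℂ) x / (g₁ : Cm m → ℂ) x * (g₁ : Cm m → ℂ) x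
    + (v : Cm m → ℂ) x * (g₂ : Cm m → ℂ) x = _
  by_cases h₁ : (g₁ : Cm m → ℂ) x = 0
  · simp [v, h₁, div_mul_cancel_of_imp (hzero x h₁)]
  · simp [v, h₁]

lemma mem_span_pair_of_eventuallyEq {g₁ g₂ f h : O m}
    (hzero : ∀ x, (g₁ : Cm m → ℂ) x = 0 → (g₂ : Cm m → ℂ) x = 0 → x = 0)
    (hh : h ∈ Ideal.span {g₁, g₂}) (hfh : (f : Cm m → ℂ) =ᶠ[𝓝 0] h) :
    f ∈ Ideal.span {g₁, g₂} := by
  have hd : ∀ᶠ x in 𝓝 0, ((f - h : O m) : Cm m → ℂ) x = 0 :=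
    hfh.mono fun x hx => sub_eq_zero.mpr hx
  rw [← sub_add_cancel f h]
  refine add_mem (mem_span_pair_of_eventually_zero hd fun x h₁ h₂ => ?_) hh
  rw [hzero x h₁ h₂]
  exact hd.self_of_nhds

end Germs

theorem eqOn_Icc_of_hasDerivAt_of_contDiff {E : Type*} [NormedAddCommGroup E]
    [NormedSpace ℝ E] {v : E → E} (hv : ContDiff ℝ 1 v) {f g : ℝ → E} {a b : ℝ}
    (hf : ∀ t ∈ Icc a b, HasDerivAt f (v (f t)) t) (hg : ∀ t ∈ Icc a b, HasDerivAt g (v (g t)) t)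
    (ha : f a = g a) : EqOn f g (Icc a b) := by
  have hfc : ContinuousOn f (Icc a b) := fun t ht => (hf t ht).continuousAt.continuousWithinAt
  have hgc : ContinuousOn g (Icc a b) := fun t ht => (hg t ht).continuousAt.continuousWithinAt
  set K := f '' Icc a b ∪ g '' Icc a b
  obtain ⟨L, hL⟩ :=
    (hv.locallyLipschitz.locallyLipschitzOn (s := K)).exists_lipschitzOnWith_of_compact
    ((isCompact_Icc.image_of_continuousOn hfc).union (isCompact_Icc.image_of_continuousOn hgc))
  exact ODE_solution_unique_of_mem_Icc_right (s := fun _ => K) (fun _ _ => hL) hfc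
    (fun t ht => (hf t (Ico_subset_Icc_self ht)).hasDerivWithinAt)
    (fun t ht => Or.inl (mem_image_of_mem f (Ico_subset_Icc_self ht))) hgc
    (fun t ht => (hg t (Ico_subset_Icc_self ht)).hasDerivWithinAt)
    (fun t ht => Or.inr (mem_image_of_mem g (Ico_subset_Icc_self ht))) ha

lemma extD_twoF (f : O 2) : extD (twoF f) = 0 := by
  funext K
  obtain ⟨k0, k1, k2, rfl⟩ : ∃ k0 k1 k2, K = ![k0, k1, k2] :=
    ⟨K 0, K 1, K 2, by funext i; fin_cases i <;> rfl⟩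
  fin_cases k0 <;> fin_cases k1 <;> fin_cases k2 <;>
    simp [extD, Fin.sum_univ_succ, twoF, pd_neg, pd_zero]

lemma iprod_twoF (X : Fin 2 → O 2) (f : O 2) :
    iprod X (twoF f) = oneF (-(X 1 * f)) (X 0 * f) := by
  funext J
  obtain ⟨j, rfl⟩ : ∃ j, J = ![j] := ⟨J 0, by funext i; fin_cases i; rfl⟩
  fin_cases j <;> simp [iprod, oneF, twoF]
  ring

lemma dLow_oneF (g h : O 2) : dLow (p := 2) (oneF g h) = twoF (pd 0 h - pd 1 g) := by
  funext J
  obtain ⟨j0, j1, rfl⟩ : ∃ j0 j1, J = ![j0, j1] :=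
    ⟨J 0, J 1, by funext i; fin_cases i <;> rfl⟩
  fin_cases j0 <;> fin_cases j1 <;>
    simp [dLow, extD, Fin.sum_univ_succ, oneF, twoF, ← sub_eq_add_neg]

lemma lieD_twoF (X : Fin 2 → O 2) (f : O 2) :
    lieD X (twoF f) = twoF (pd 0 (X 0 * f) + pd 1 (X 1 * f)) := by
  have hX0 : iprod X (0 : Form 2 3) = 0 := by funext J; simp [iprod]
  change dLow (p := 2) (iprod X (twoF f)) + iprod X (extD (twoF f)) = _
  rw [iprod_twoF, dLow_oneF, extD_twoF, hX0, add_zero, pd_neg, sub_neg_eq_add]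

lemma differentiable_Y : Differentiable ℂ (Y : Cm 2 → ℂ) := differentiable_coordO 0
lemma differentiable_Z : Differentiable ℂ (Z : Cm 2 → ℂ) := differentiable_coordO 1

lemma pd_Y (i : Fin 2) : pd i Y = if i = 0 then 1 else 0 := pd_coordO i 0
lemma pd_Z (i : Fin 2) : pd i Z = if i = 1 then 1 else 0 := pd_coordO i 1

/-- The vector field `c z E` with `E = a y ∂/∂y + 2 z ∂/∂z`. -/
def zEulerField (a : ℕ) (c : ℂ) : Fin 2 → O 2 := ![(c * a) • (Z * Y), (2 * c) • Z ^ 2]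

lemma lieD_zEulerField_const (a : ℕ) (c A : ℂ) :
    lieD (zEulerField a c) (twoF (A • 1)) = twoF ((c * (a + 4) * A) • Z) := by
  rw [lieD_twoF]
  congr 1
  simp [zEulerField, sq, pd_smul, pd_mul, differentiable_Y, differentiable_Z, pd_Y, pd_Z]
  module

lemma lieD_zEulerField_Z (a : ℕ) (c B : ℂ) :
    lieD (zEulerField a c) (twoF (B • Z)) =
      dLow (p := 2) (oneF 0 ((c * B * (a + 6)) • (Y * Z ^ 2))) := by
  rw [lieD_twoF, dLow_oneF]
  congr 1
  simp [zEulerField, sq, pd_smul, pd_zero, pd_mul, add_mul, differentiable_Y, differentiable_Z,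
    Differentiable.mul, pd_Y, pd_Z]
  module

lemma zeroAR_lieD_zEulerField_twoF_Z (a : ℕ) (c B : ℂ) :
    ZeroAR (Ideal.span {Y ^ 2 + Z ^ a, Y * Z ^ 2}) (lieD (zEulerField a c) (twoF (B • Z))) := by
  refine ⟨0, oneF 0 ((c * B * (a + 6)) • (Y * Z ^ 2)), fun _ => zero_mem _, fun J => ?_,
    fun J => ?_⟩
  · unfold oneF
    split_ifs
    exacts [zero_mem _, Submodule.smul_of_tower_mem _ _ (Ideal.subset_span (by simp))]
  · rw [lieD_zEulerField_Z, zero_add]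

lemma eq_zero_of_Y_sq_add_Z_pow_eq_zero {a : ℕ} (ha : a ≠ 0) {x : Cm 2}
    (h₁ : ((Y ^ 2 + Z ^ a : O 2) : Cm 2 → ℂ) x = 0) (h₂ : ((Y * Z ^ 2 : O 2) : Cm 2 → ℂ) x = 0) :
    x = 0 := by
  simp only [Subalgebra.coe_add, Subalgebra.coe_mul, Subalgebra.coe_pow, Pi.add_apply,
    Pi.mul_apply, Pi.pow_apply, Y, Z, coordO_apply] at h₁ h₂
  have hx : x 0 = 0 ∧ x 1 = 0 := by
    rcases mul_eq_zero.mp h₂ with h | h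
    · simp_all
    · simp_all [zero_pow ha]
  exact funext <| Fin.forall_fin_two.2 hx

section Flow

variable (a : ℕ) (c : ℂ)

/-- Solves `y' = c a z y`, `z' = 2 c z²` (the system of `c z E`) with initial value `x`. -/
def zEulerFlow (τ : ℂ) (x : Cm 2) : Cm 2 :=
  ![x 0 * (1 - 2 * c * τ * x 1) ^ (-(a : ℂ) / 2), x 1 / (1 - 2 * c * τ * x 1)]

lemma zEulerFlow_time_zero (x : Cm 2) : zEulerFlow a c 0 x = x := by
  funext i; fin_cases i <;> simp [zEulerFlow]

lemma zEulerFlow_apply_zero (τ : ℂ) : zEulerFlow a c τ 0 = 0 := by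
  funext i; fin_cases i <;> simp [zEulerFlow]

lemma eventually_denom_mem_slitPlane (τ : ℂ) :
    ∀ᶠ x in 𝓝 (0 : Cm 2), 1 - 2 * c * τ * x 1 ∈ Complex.slitPlane := by
  have hcont : Continuous fun x : Cm 2 => 1 - 2 * c * τ * x 1 := by fun_prop
  exact hcont.continuousAt.eventually_mem (Complex.isOpen_slitPlane.mem_nhds (by simp))

lemma analyticAt_zEulerFlow (τ : ℂ) : AnalyticAt ℂ (zEulerFlow a c τ) 0 := by
  have hw : AnalyticAt ℂ (fun x : Cm 2 => 1 - 2 * c * τ * x 1) 0 :=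
    analyticAt_const.sub (analyticAt_const.mul (coord_analyticAt 2 1 0))
  have hw0 : (1 - 2 * c * τ * (0 : Cm 2) 1) ∈ Complex.slitPlane := by simp
  rw [analyticAt_pi_iff]
  intro i
  fin_cases i
  · exact (coord_analyticAt 2 0 0).mul (hw.cpow analyticAt_const hw0)
  · exact (coord_analyticAt 2 1 0).div hw (Complex.slitPlane_ne_zero hw0)

lemma zEulerFlow_sq_add_pow {τ : ℂ} {x : Cm 2} (hw : 1 - 2 * c * τ * x 1 ≠ 0) :
    zEulerFlow a c τ x 0 ^ 2 + zEulerFlow a c τ x 1 ^ a =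
      ((1 - 2 * c * τ * x 1) ^ a)⁻¹ * (x 0 ^ 2 + x 1 ^ a) := by
  have hpow : ((1 - 2 * c * τ * x 1) ^ (-(a : ℂ) / 2)) ^ 2 = ((1 - 2 * c * τ * x 1) ^ a)⁻¹ := by
    rw [← Complex.cpow_nat_mul, Nat.cast_ofNat, mul_div_cancel₀ _ two_ne_zero, Complex.cpow_neg,
      Complex.cpow_natCast]
  simp only [zEulerFlow, Matrix.cons_val_zero, Matrix.cons_val_one]
  rw [mul_pow, hpow, div_pow]
  field_simp

lemma zEulerFlow_mul_sq {τ : ℂ} {x : Cm 2} (hw : 1 - 2 * c * τ * x 1 ≠ 0) :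
    zEulerFlow a c τ x 0 * zEulerFlow a c τ x 1 ^ 2 =
      (1 - 2 * c * τ * x 1) ^ (-((a : ℂ) + 4) / 2) * (x 0 * x 1 ^ 2) := by
  have hpow : (1 - 2 * c * τ * x 1) ^ (-((a : ℂ) + 4) / 2) =
      (1 - 2 * c * τ * x 1) ^ (-(a : ℂ) / 2) / (1 - 2 * c * τ * x 1) ^ 2 := by
    rw [show -((a : ℂ) + 4) / 2 = -(a : ℂ) / 2 - (2 : ℕ) by push_cast; ring,
      Complex.cpow_sub _ _ hw, Complex.cpow_natCast]
  simp only [zEulerFlow, Matrix.cons_val_zero, Matrix.cons_val_one]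
  rw [hpow]
  field_simp

lemma exists_mem_span_eventuallyEq_comp_zEulerFlow (τ : ℂ) {g : O 2}
    (hg : g ∈ Ideal.span {Y ^ 2 + Z ^ a, Y * Z ^ 2}) :
    ∃ g' ∈ Ideal.span {Y ^ 2 + Z ^ a, Y * Z ^ 2},
      (g' : Cm 2 → ℂ) =ᶠ[𝓝 0] fun x => (g : Cm 2 → ℂ) (zEulerFlow a c τ x) := by
  obtain ⟨p, q, rfl⟩ := Ideal.mem_span_pair.mp hg
  have hΦ := analyticAt_zEulerFlow a c τ
  have hΦ0 := zEulerFlow_apply_zero a c τ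
  have hw : AnalyticAt ℂ (fun x : Cm 2 => 1 - 2 * c * τ * x 1) 0 :=
    analyticAt_const.sub (analyticAt_const.mul (coord_analyticAt 2 1 0))
  have hw0 : (1 - 2 * c * τ * (0 : Cm 2) 1) ∈ Complex.slitPlane := by simp
  let comp (f : O 2) : O 2 := ⟨fun x => (f : Cm 2 → ℂ) (zEulerFlow a c τ x),
    (by rw [hΦ0]; exact f.2 : AnalyticAt ℂ (f : Cm 2 → ℂ) (zEulerFlow a c τ 0)).comp hΦ⟩
  let u₁ : O 2 := ⟨fun x => ((1 - 2 * c * τ * x 1) ^ a)⁻¹,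
    (hw.pow a).inv (pow_ne_zero a (Complex.slitPlane_ne_zero hw0))⟩
  let u₂ : O 2 := ⟨fun x => (1 - 2 * c * τ * x 1) ^ (-((a : ℂ) + 4) / 2),
    hw.cpow analyticAt_const hw0⟩
  refine ⟨comp p * u₁ * (Y ^ 2 + Z ^ a) + comp q * u₂ * (Y * Z ^ 2),
    Ideal.mem_span_pair.mpr ⟨_, _, rfl⟩, ?_⟩
  filter_upwards [eventually_denom_mem_slitPlane c τ] with x hx
  have hx0 := Complex.slitPlane_ne_zero hx
  simp only [Subalgebra.coe_add, Subalgebra.coe_mul, Subalgebra.coe_pow, Pi.add_apply,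
    Pi.mul_apply, Pi.pow_apply, Y, Z, coordO_apply, comp, u₁, u₂]
  rw [zEulerFlow_sq_add_pow a c hx0, zEulerFlow_mul_sq a c hx0]
  ring

lemma eventually_zEulerFlow_zEulerFlow_neg (τ : ℂ) :
    ∀ᶠ x in 𝓝 (0 : Cm 2), zEulerFlow a c τ (zEulerFlow a c (-τ) x) = x := by
  filter_upwards [eventually_denom_mem_slitPlane c (-τ)] with x hx
  have hw0 := Complex.slitPlane_ne_zero hx
  have hdenom : 1 - 2 * c * τ * (x 1 / (1 - 2 * c * -τ * x 1)) = (1 - 2 * c * -τ * x 1)⁻¹ := by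
    refine eq_inv_of_mul_eq_one_left ?_
    rw [sub_mul, one_mul, mul_assoc (2 * c * τ), div_mul_cancel₀ _ hw0]
    ring
  refine funext <| Fin.forall_fin_two.2 ⟨?_, ?_⟩
  · simp only [zEulerFlow, Matrix.cons_val_zero, Matrix.cons_val_one]
    rw [hdenom, Complex.inv_cpow _ _ (Complex.slitPlane_arg_ne_pi hx), mul_assoc,
      mul_inv_cancel₀ (Complex.cpow_ne_zero_iff.2 (Or.inl hw0)), mul_one]
  · simp only [zEulerFlow, Matrix.cons_val_zero, Matrix.cons_val_one]
    rw [hdenom, div_inv_eq_mul, div_mul_cancel₀ _ hw0]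

lemma zEulerField_apply (p : Cm 2) :
    (fun i => (zEulerField a c i : Cm 2 → ℂ) p) = ![c * a * (p 1 * p 0), 2 * c * p 1 ^ 2] := by
  refine funext <| Fin.forall_fin_two.2 ⟨?_, ?_⟩ <;> simp [zEulerField, Y, Z]

lemma contDiff_zEulerField :
    ContDiff ℝ 1 fun (p : Cm 2) (i : Fin 2) => (zEulerField a c i : Cm 2 → ℂ) p := by
  rw [show (fun (p : Cm 2) (i : Fin 2) => (zEulerField a c i : Cm 2 → ℂ) p) = _ from
    funext (zEulerField_apply a c)]
  refine ((contDiff_pi (𝕜 := ℂ)).2 <| Fin.forall_fin_two.2 ⟨?_, ?_⟩).restrict_scalars ℝ <;>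
    simp only [Matrix.cons_val_zero, Matrix.cons_val_one] <;> fun_prop

lemma hasDerivAt_zEulerFlow {s : ℝ} {x : Cm 2} (hw : 1 - 2 * c * s * x 1 ∈ Complex.slitPlane) :
    HasDerivAt (fun s : ℝ => zEulerFlow a c s x)
      (fun i => (zEulerField a c i : Cm 2 → ℂ) (zEulerFlow a c s x)) s := by
  have hw0 := Complex.slitPlane_ne_zero hw
  have hden : HasDerivAt (fun τ : ℂ => 1 - 2 * c * τ * x 1) (-(2 * c * x 1)) s := by
    simpa using ((hasDerivAt_id (s : ℂ)).const_mul (2 * c)).mul_const (x 1) |>.const_sub 1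
  rw [zEulerField_apply, hasDerivAt_pi]
  refine Fin.forall_fin_two.2 ⟨?_, ?_⟩ <;>
    simp only [zEulerFlow, Matrix.cons_val_zero, Matrix.cons_val_one]
  · refine ((hden.cpow_const hw).const_mul (x 0)).comp_ofReal.congr_deriv ?_
    rw [Complex.cpow_sub _ _ hw0, Complex.cpow_one]
    field_simp
  · refine ((hasDerivAt_const _ (x 1)).div hden hw0).comp_ofReal.congr_deriv ?_
    field_simp
    ring

lemma denom_mem_slitPlane {s : ℝ} (hs : s ∈ Icc (0 : ℝ) 1) {x : Cm 2} (hx : ‖2 * c * x 1‖ < 1) :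
    1 - 2 * c * s * x 1 ∈ Complex.slitPlane := by
  rw [sub_eq_add_neg]
  refine Complex.mem_slitPlane_of_norm_lt_one (lt_of_le_of_lt ?_ hx)
  rw [norm_neg, mul_right_comm, norm_mul (2 * c * x 1), Complex.norm_real, Real.norm_eq_abs,
    abs_of_nonneg hs.1]
  exact mul_le_of_le_one_right (norm_nonneg _) hs.2

lemma eventuallyEq_zEulerFlow_of_hasDerivAt {Φ : ℝ → Cm 2 → Cm 2} (hΦ0 : Φ 0 = id)
    (hΦ : ∀ t ∈ Icc (0 : ℝ) 1, ∀ x : Cm 2,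
      HasDerivAt (fun s => Φ s x) (fun i => (zEulerField a c i : Cm 2 → ℂ) (Φ t x)) t)
    {t : ℝ} (ht : t ∈ Icc (0 : ℝ) 1) : Φ t =ᶠ[𝓝 0] zEulerFlow a c t := by
  have hsmall : ∀ᶠ x in 𝓝 (0 : Cm 2), ‖2 * c * x 1‖ < 1 :=
    (continuous_const.mul (continuous_apply 1)).norm.continuousAt.eventually_lt
      continuousAt_const (by simp)
  filter_upwards [hsmall] with x hx
  refine eqOn_Icc_of_hasDerivAt_of_contDiff (contDiff_zEulerField a c) (fun s hs => hΦ s hs x)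
    (fun s hs => hasDerivAt_zEulerFlow a c (denom_mem_slitPlane c hs hx)) ?_ ht
  simp [hΦ0, zEulerFlow_time_zero]

end Flow

lemma preservesIdeal_zEulerFlow {a : ℕ} (ha : a ≠ 0) (c τ : ℂ) :
    PreservesIdeal (zEulerFlow a c τ) (Ideal.span {Y ^ 2 + Z ^ a, Y * Z ^ 2}) := by
  intro f
  refine ⟨exists_mem_span_eventuallyEq_comp_zEulerFlow a c τ, ?_⟩
  rintro ⟨g, hg, hgf⟩
  obtain ⟨g', hg', hg'g⟩ := exists_mem_span_eventuallyEq_comp_zEulerFlow a c (-τ) hg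
  have hback : Tendsto (zEulerFlow a c (-τ)) (𝓝 0) (𝓝 0) := by
    simpa [zEulerFlow_apply_zero] using (analyticAt_zEulerFlow a c (-τ)).continuousAt.tendsto
  refine mem_span_pair_of_eventuallyEq (fun x => eq_zero_of_Y_sq_add_Z_pow_eq_zero ha) hg' ?_
  filter_upwards [hg'g, hback.eventually hgf, eventually_zEulerFlow_zEulerFlow_neg a c τ]
    with x h₁ h₂ h₃
  rw [h₁, h₂, h₃]

/-- with `E = a y ∂/∂y + 2 z ∂/∂z` (for which `y²+z^a` has
quasi-degree `2a` and `yz²` has quasi-degree `a+4`) and `X = (B/((a+4)A)) z E`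
(`A ≠ 0`): `L_X (A dy∧dz) = B z dy∧dz`, `L_X (B z dy∧dz)` has zero algebraic
restriction to `J = ⟨y²+z^a, yz²⟩`, and the flow of `X` preserves `J`. -/
theorem statement_12 (a : ℕ) (ha : 4 ≤ a) (A B : ℂ) (hA : A ≠ 0) :
    ∀ X : Fin 2 → O 2,
      X = ![(B / (((a : ℂ) + 4) * A) * (a : ℂ)) • (Z * Y),
            (2 * (B / (((a : ℂ) + 4) * A))) • (Z ^ 2)] →
      (∀ (t : ℂ) (x : Cm 2),
        ((Y ^ 2 + Z ^ a : O 2) : Cm 2 → ℂ) ![t ^ a * x 0, t ^ 2 * x 1]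
          = t ^ (2 * a) * ((Y ^ 2 + Z ^ a : O 2) : Cm 2 → ℂ) x) ∧
      (∀ (t : ℂ) (x : Cm 2),
        ((Y * Z ^ 2 : O 2) : Cm 2 → ℂ) ![t ^ a * x 0, t ^ 2 * x 1]
          = t ^ (a + 4) * ((Y * Z ^ 2 : O 2) : Cm 2 → ℂ) x) ∧
      FormEq (lieD X (twoF (A • 1))) (twoF (B • Z)) ∧
      ZeroAR (Ideal.span {Y ^ 2 + Z ^ a, Y * Z ^ 2}) (lieD X (twoF (B • Z))) ∧
      ∀ Φ : ℝ → Cm 2 → Cm 2, Φ 0 = id →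
        (∀ t ∈ Set.Icc (0:ℝ) 1, ∀ x : Cm 2,
          HasDerivAt (fun s => Φ s x) (fun i => (X i : Cm 2 → ℂ) (Φ t x)) t) →
        ∀ t ∈ Set.Icc (0:ℝ) 1,
          PreservesIdeal (Φ t) (Ideal.span {Y ^ 2 + Z ^ a, Y * Z ^ 2}) := by
  set c := B / (((a : ℂ) + 4) * A)
  rintro X (rfl : X = zEulerField a c)
  have hcA : c * (a + 4) * A = B := by
    have : (a : ℂ) + 4 ≠ 0 := by exact_mod_cast (by omega : a + 4 ≠ 0)
    simp only [c]
    field_simp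
  refine ⟨fun t x => ?_, fun t x => ?_, ?_, zeroAR_lieD_zEulerField_twoF_Z a c B, ?_⟩
  · simp [Y, Z]
    ring
  · simp [Y, Z]
    ring
  · rw [lieD_zEulerField_const, hcA]
    exact fun _ => EventuallyEq.rfl
  · intro Φ hΦ0 hΦ t ht
    exact (preservesIdeal_zEulerFlow (by omega) c t).congr
      (eventuallyEq_zEulerFlow_of_hasDerivAt a c hΦ0 hΦ ht).symm
end
end

section
/- For the ideal J = ⟨yz, y^a + z^b⟩ in O(C²) with a ≥ b ≥ 2, every germ of a closed 2-form on (C²,0) has algebraic restriction to J of the form A·[dy∧dz]_J for some A ∈ C; that is, the space of algebraic restrictions of closed 2-forms to J is at most 1-dimensional. -/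
open Filter Topology

set_option maxHeartbeats 1000000
set_option synthInstance.maxHeartbeats 400000

noncomputable section

/-! A 2-form on `ℂ²` is `f dy∧dz`, and Hadamard's lemma writes `f = f(0) + y u + z v`.
Since `d(-yz u dy + yz v dz) = (y u + z v + yz (∂_y v + ∂_z u)) dy∧dz`, the form
`(f - f(0)) dy∧dz` is the differential of a 1-form with coefficients in `⟨yz⟩` plus a 2-form
with coefficient in `⟨yz⟩`. -/

section Hadamard

variable {𝕜 E F ι : Type*} [NontriviallyNormedField 𝕜] [NormedAddCommGroup E]
  [NormedSpace 𝕜 E] [NormedAddCommGroup F] [NormedSpace 𝕜 F] [CompleteSpace F]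

theorem AnalyticAt.exists_eq_add_apply_self {g : E → F} (hg : AnalyticAt 𝕜 g 0) :
    ∃ q : E → E →L[𝕜] F, AnalyticAt 𝕜 q 0 ∧ ∀ᶠ x in 𝓝 0, g x = g 0 + q x x := by
  obtain ⟨p, r, hp⟩ := hg
  have hpos : 0 < p.shift.radius := by
    rw [p.radius_shift]
    exact hp.r_pos.trans_le hp.r_le
  refine ⟨p.shift.sum, (p.shift.hasFPowerSeriesOnBall hpos).analyticAt, ?_⟩
  filter_upwards [Metric.eball_mem_nhds (0 : E) hp.r_pos] with x hx
  have hx' : x ∈ Metric.eball (0 : E) p.shift.radius := by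
    rw [p.radius_shift]
    exact Metric.eball_subset_eball hp.r_le hx
  have hq := (ContinuousLinearMap.apply 𝕜 F x).hasSum (p.shift.hasSum hx')
  have hg : HasSum (fun n => p (n + 1) fun _ => x) (g x - g 0) := by
    simpa [hp.coeff_zero] using (hasSum_nat_add_iff' 1).2 (hp.hasSum (by simpa using hx))
  have hsnoc (n : ℕ) : (Fin.snoc (fun _ => x) x : Fin (n + 1) → E) = fun _ => x := by
    funext i; induction i using Fin.lastCases <;> simp
  simp only [FormalMultilinearSeries.shift, ContinuousLinearMap.apply_apply,
    ContinuousMultilinearMap.curryRight_apply, hsnoc] at hq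
  rw [← hg.unique hq]
  abel

theorem AnalyticAt.exists_eq_add_sum_smul [Fintype ι] [DecidableEq ι] {g : (ι → 𝕜) → F}
    (hg : AnalyticAt 𝕜 g 0) :
    ∃ u : ι → (ι → 𝕜) → F, (∀ i, AnalyticAt 𝕜 (u i) 0) ∧
      ∀ᶠ x in 𝓝 0, g x = g 0 + ∑ i, x i • u i x := by
  obtain ⟨q, hq, hgq⟩ := hg.exists_eq_add_apply_self
  refine ⟨fun i x => q x (Pi.single i 1),
    fun i => ((ContinuousLinearMap.apply 𝕜 F (Pi.single i 1 : ι → 𝕜)).analyticAt _).comp hq,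
    ?_⟩
  filter_upwards [hgq] with x hx
  have hqx : q x x = ∑ i, x i • q x (Pi.single i 1) := by
    conv_lhs => enter [2]; rw [pi_eq_sum_univ' x]
    simp
  rw [hx, hqx]

end Hadamard

namespace AnalyticGermRing

variable {m : ℕ}

theorem exists_eq_add_sum_coord_mul (f : O m) :
    ∃ u : Fin m → O m, ∀ᶠ x in 𝓝 0,
      (f : Cm m → ℂ) x = (f : Cm m → ℂ) 0 + ∑ i, x i * (u i : Cm m → ℂ) x := by
  obtain ⟨u, hu, hfu⟩ := f.2.exists_eq_add_sum_smul
  exact ⟨fun i => ⟨u i, hu i⟩, hfu⟩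

theorem pd_mul_apply (i : Fin m) {f g : O m} {x : Cm m}
    (hf : DifferentiableAt ℂ (f : Cm m → ℂ) x) (hg : DifferentiableAt ℂ (g : Cm m → ℂ) x) :
    (pd i (f * g) : Cm m → ℂ) x =
      (pd i f : Cm m → ℂ) x * (g : Cm m → ℂ) x +
        (f : Cm m → ℂ) x * (pd i g : Cm m → ℂ) x := by
  show fderiv ℂ (fun y => (f : Cm m → ℂ) y * (g : Cm m → ℂ) y) x _ = _
  rw [fderiv_fun_mul hf hg]
  simp only [add_apply, smul_apply, smul_eq_mul, pd]
  ring

theorem pd_coordO_apply (i j : Fin m) (x : Cm m) :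
    (pd i (coordO m j) : Cm m → ℂ) x = Pi.single (M := fun _ => ℂ) i 1 j := by
  show fderiv ℂ (fun y : Cm m => y j) x _ = _
  rw [fderiv_apply differentiableAt_id]
  simp

theorem eventually_differentiableAt (f : O m) :
    ∀ᶠ x in 𝓝 0, DifferentiableAt ℂ (f : Cm m → ℂ) x :=
  f.2.eventually_analyticAt.mono fun _ hx => hx.differentiableAt

@[simp]
theorem coe_coordO (i : Fin m) : (coordO m i : Cm m → ℂ) = fun x => x i := rfl

end AnalyticGermRing

open AnalyticGermRing

theorem exists_eq_vecCons_two {α : Type*} (J : Fin 2 → α) : ∃ i j, J = ![i, j] :=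
  ⟨J 0, J 1, by ext k; fin_cases k <;> rfl⟩

theorem IsAlt.eq_twoF {ω : Form 2 2} (h : IsAlt ω) : ω = twoF (ω ![0, 1]) := by
  have h10 : ω ![1, 0] = -ω ![0, 1] := by
    have := h.2 ![0, 1] (Equiv.swap 0 1)
    rw [Equiv.Perm.sign_swap (by decide)] at this
    simpa [show ![0, 1] ∘ Equiv.swap (0 : Fin 2) 1 = ![1, 0] by decide] using this
  funext J
  obtain ⟨i, j, rfl⟩ := exists_eq_vecCons_two J
  fin_cases i <;> fin_cases j
  all_goals simp [twoF, h10, h.1 ![0, 0] (by decide), h.1 ![1, 1] (by decide)]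

theorem twoF_add (f g : O 2) : twoF (f + g) = twoF f + twoF g := by
  funext J; simp only [twoF, Pi.add_apply]; split_ifs <;> abel

theorem twoF_sub (f g : O 2) : twoF (f - g) = twoF f - twoF g := by
  funext J; simp only [twoF, Pi.sub_apply]; split_ifs <;> abel

theorem extD_oneF (g h : O 2) : extD (oneF g h) = twoF (pd 0 h - pd 1 g) := by
  funext J
  obtain ⟨i, j, rfl⟩ := exists_eq_vecCons_two J
  fin_cases i <;> fin_cases j
  all_goals simp [extD, oneF, twoF, Fin.sum_univ_two, sub_eq_add_neg]

theorem memIF_twoF {I : Ideal (O 2)} {f : O 2} (hf : f ∈ I) : memIF I (twoF f) := by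
  intro J; unfold twoF; split_ifs
  exacts [hf, neg_mem hf, zero_mem I]

theorem memIF_oneF {I : Ideal (O 2)} {g h : O 2} (hg : g ∈ I) (hh : h ∈ I) :
    memIF I (oneF g h) := by
  intro J; unfold oneF; split_ifs
  exacts [hg, hh]

theorem formEq_twoF {f g : O 2} (hfg : (f : Cm 2 → ℂ) =ᶠ[𝓝 0] g) :
    FormEq (twoF f) (twoF g) := by
  intro J; unfold twoF; split_ifs
  · exact hfg
  · exact hfg.neg
  · rfl

theorem zeroAR_twoF {I : Ideal (O 2)} (hYZ : Y * Z ∈ I) {f : O 2}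
    (hf : (f : Cm 2 → ℂ) 0 = 0) : ZeroAR I (twoF f) := by
  obtain ⟨u, hfu⟩ := exists_eq_add_sum_coord_mul f
  set G := Y * Z * -u 0
  set H := Y * Z * u 1
  refine ⟨twoF (-(Y * Z * (pd 0 (u 1) - pd 1 (-u 0)))), oneF G H,
    memIF_twoF (neg_mem (Ideal.mul_mem_right _ _ hYZ)),
    memIF_oneF (Ideal.mul_mem_right _ _ hYZ) (Ideal.mul_mem_right _ _ hYZ), ?_⟩
  change FormEq (twoF f) (twoF _ + extD (oneF G H))
  rw [extD_oneF, ← twoF_add]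
  refine formEq_twoF ?_
  filter_upwards [hfu, eventually_differentiableAt Y, eventually_differentiableAt Z,
    eventually_differentiableAt (Y * Z), eventually_differentiableAt (u 1),
    eventually_differentiableAt (-u 0)] with x hx hY hZ hYZx h1 h0
  simp only [G, H, Subalgebra.coe_add, Subalgebra.coe_neg, Subalgebra.coe_sub,
    Subalgebra.coe_mul, Pi.add_apply, Pi.neg_apply, Pi.sub_apply, Pi.mul_apply,
    pd_mul_apply _ hYZx h1, pd_mul_apply _ hYZx h0, pd_mul_apply _ hY hZ]
  simp only [Y, Z, coe_coordO, pd_coordO_apply, Pi.single_eq_same,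
    Pi.single_eq_of_ne zero_ne_one, Pi.single_eq_of_ne one_ne_zero]
  rw [hx, hf, Fin.sum_univ_two]
  ring

theorem statement_19_general (a b : ℕ)
    (ω : Form 2 2) (hAlt : IsAlt ω) :
    ∃ A : ℂ, ZeroAR (Ideal.span {Y * Z, Y ^ a + Z ^ b}) (ω - twoF (A • 1)) := by
  refine ⟨(ω ![0, 1] : Cm 2 → ℂ) 0, ?_⟩
  nth_rewrite 1 [hAlt.eq_twoF]
  rw [← twoF_sub]
  exact zeroAR_twoF (Ideal.subset_span (Set.mem_insert _ _)) (by simp)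

/-- for `J = ⟨yz, y^a + z^b⟩`, `a ≥ b ≥ 2`, every closed 2-form
germ on `(ℂ²,0)` has algebraic restriction to `J` of the form `A·[dy∧dz]_J`. -/
theorem statement_19 (a b : ℕ) (hb : 2 ≤ b) (hab : b ≤ a)
    (ω : Form 2 2) (hAlt : IsAlt ω) (hclosed : FormEq (extD ω) 0) :
    ∃ A : ℂ, ZeroAR (Ideal.span {Y * Z, Y ^ a + Z ^ b}) (ω - twoF (A • 1)) :=
  statement_19_general a b ω hAlt
end
end
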